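/- Every dually ms Stone semi-Heyting algebra is at level 2, i.e., satisfies the identity (x ∧ x′*)′* = (x ∧ x′*)′*′*. -/

import Mathlib

class SemiHeyting (α : Type*) extends Lattice α, BoundedOrder α where
  himp : α → α → α
  sh1 : ∀ x y : α, x ⊓ himp x y = x ⊓ y
  sh2 : ∀ x y z : α, x ⊓ himp y z = x ⊓ himp (x ⊓ y) (x ⊓ z)
  sh3 : ∀ x : α, himp x x = ⊤

namespace SemiHeyting

variable {α : Type*} [SemiHeyting α]

def star (x : α) : α := himp x ⊥

end SemiHeyting

class DQD (α : Type*) extends SemiHeyting α where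
  prime : α → α
  prime_bot : prime ⊥ = ⊤
  prime_top : prime ⊤ = ⊥
  prime_inf : ∀ x y : α, prime (x ⊓ y) = prime x ⊔ prime y
  prime_prime_sup : ∀ x y : α, prime (prime (x ⊔ y)) = prime (prime x) ⊔ prime (prime y)
  prime_prime_le : ∀ x : α, prime (prime x) ≤ x

class DmsSt (α : Type*) extends DQD α where
  stone : ∀ x : α, SemiHeyting.star x ⊔ SemiHeyting.star (SemiHeyting.star x) = ⊤
  jdm : ∀ x y : α, prime (x ⊔ y) = prime x ⊓ prime y

open SemiHeyting DQD

/-!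
Stone's identity makes `a := (x′)*` complemented, with complement `a*`. A semi-Heyting algebra
is distributive and `*` is its pseudocomplement, so the pseudocomplement of a complemented
element is its complement; the two De Morgan laws make `′` send complementary pairs to
complementary pairs, and together with `x″ ≤ x` this forces `a″ = a`. Both sides of the
identity then evaluate to `a ∧ (a*)′`.
-/

namespace SemiHeyting

variable {α : Type*} [SemiHeyting α]

theorem le_himp_inf_iff {x y z : α} : z ≤ SemiHeyting.himp x (x ⊓ y) ↔ z ⊓ x ≤ y := by
  constructor
  · intro h
    calc z ⊓ x ≤ x ⊓ SemiHeyting.himp x (x ⊓ y) := le_inf inf_le_right (inf_le_left.trans h)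
      _ = x ⊓ (x ⊓ y) := sh1 x (x ⊓ y)
      _ ≤ y := inf_le_right.trans inf_le_right
  · intro h
    have key := sh2 z x (x ⊓ y)
    rw [← inf_assoc, inf_eq_left.2 h, sh3, inf_top_eq] at key
    exact inf_eq_left.1 key

theorem inf_sup_le (a b c : α) : a ⊓ (b ⊔ c) ≤ a ⊓ b ⊔ a ⊓ c := by
  have hb : b ≤ SemiHeyting.himp a (a ⊓ (a ⊓ b ⊔ a ⊓ c)) :=
    le_himp_inf_iff.2 (inf_comm b a ▸ le_sup_left)
  have hc : c ≤ SemiHeyting.himp a (a ⊓ (a ⊓ b ⊔ a ⊓ c)) :=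
    le_himp_inf_iff.2 (inf_comm c a ▸ le_sup_right)
  rw [inf_comm]
  exact le_himp_inf_iff.1 (sup_le hb hc)

instance toDistribLattice : DistribLattice α :=
  DistribLattice.ofInfSupLe inf_sup_le

theorem le_star_iff {x z : α} : z ≤ star x ↔ Disjoint z x := by
  rw [disjoint_iff_inf_le, star, ← le_himp_inf_iff, inf_bot_eq]

theorem disjoint_star (x : α) : Disjoint (star x) x :=
  le_star_iff.1 le_rfl

theorem star_sup (a b : α) : star (a ⊔ b) = star a ⊓ star b :=
  eq_of_forall_le_iff fun z => by
    rw [le_star_iff, disjoint_sup_right, le_inf_iff, le_star_iff, le_star_iff]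

theorem star_eq_of_isCompl {a b : α} (h : IsCompl a b) : star a = b :=
  eq_of_forall_le_iff fun z => by rw [le_star_iff, h.symm.le_left_iff]

end SemiHeyting

namespace DmsSt

variable {α : Type*} [DmsSt α]

theorem isCompl_star (x : α) : IsCompl (star x) (star (star x)) :=
  IsCompl.of_eq (disjoint_iff.1 (disjoint_star (star x)).symm) (stone x)

theorem isCompl_prime {a b : α} (h : IsCompl a b) : IsCompl (prime a) (prime b) :=
  IsCompl.of_eq (by rw [← jdm, h.sup_eq_top, prime_top])
    (by rw [← prime_inf, h.inf_eq_bot, prime_bot])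

theorem prime_prime_eq_of_isCompl {a b : α} (h : IsCompl a b) : prime (prime a) = a :=
  le_antisymm (prime_prime_le a)
    ((isCompl_prime (isCompl_prime h)).le_left_iff.2 (h.disjoint.mono_right (prime_prime_le b)))

theorem star_prime_inf_of_isCompl (y : α) {a b : α} (h : IsCompl a b) :
    star (prime (y ⊓ a)) = star (prime y) ⊓ prime b := by
  rw [prime_inf, star_sup, star_eq_of_isCompl (isCompl_prime h)]

end DmsSt

open DmsSt in
theorem stmt18 {α : Type*} [DmsSt α] (x : α) :
    SemiHeyting.star (DQD.prime (x ⊓ SemiHeyting.star (DQD.prime x)))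
      = SemiHeyting.star (DQD.prime (SemiHeyting.star (DQD.prime (x ⊓ SemiHeyting.star (DQD.prime x))))) := by
  set a := star (prime x)
  have ha : IsCompl a (star a) := isCompl_star (prime x)
  rw [star_prime_inf_of_isCompl x ha, star_prime_inf_of_isCompl a (isCompl_prime ha).symm,
    star_eq_of_isCompl (isCompl_prime ha), prime_prime_eq_of_isCompl ha, inf_comm]
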